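/- With the setting of the generalized Fiedler–Bapat identity (Q symmetric PSD with ker(Q) = span(1), ζ := diagvec(Q†), Ω := 1ζᵀ + ζ1ᵀ − 2Q†, p := (1/2)Qζ + (1/n)1, σ² := (1/4)ζᵀQζ + (1/n)1ᵀζ), the following hold: 1ᵀp = 1, Ωp = 2σ²·1, and ΩQ = −2I + 2·1pᵀ. -/

import Mathlib

open Matrix Classical

/-- The Moore–Penrose pseudoinverse of a real matrix, defined via its four
characterizing Penrose equations (which have a unique solution). -/
noncomputable def pinv {m k : Type*} [Fintype m] [Fintype k]
    (A : Matrix m k ℝ) : Matrix k m ℝ :=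
  if h : ∃ X : Matrix k m ℝ,
      A * X * A = A ∧ X * A * X = X ∧ (A * X)ᵀ = A * X ∧ (X * A)ᵀ = X * A
  then h.choose else 0

/-!
Let `E = (1/n) 𝟙𝟙ᵀ` be the orthogonal projection onto the constants. Because `Q` is symmetric
with kernel spanned by `𝟙`, we have `QE = EQ = 0` and `Q + E` is invertible, and then
`(Q + E)⁻¹ - E` satisfies the four Penrose equations; by their uniqueness it is `Q†`. Hence
`Q†Q = I - E` and `Q†𝟙 = 0`, and together with `𝟙ᵀQ = 0` these two identities give all three
relations by direct computation.
-/

def IsMoorePenroseInverse {m k : Type*} [Fintype m] [Fintype k]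
    (A : Matrix m k ℝ) (X : Matrix k m ℝ) : Prop :=
  A * X * A = A ∧ X * A * X = X ∧ (A * X)ᵀ = A * X ∧ (X * A)ᵀ = X * A

namespace IsMoorePenroseInverse

variable {m k : Type*} [Fintype m] [Fintype k] {A : Matrix m k ℝ} {X Y : Matrix k m ℝ}

theorem eq_mul_mul_transpose (hX : IsMoorePenroseInverse A X) : X = X * Xᵀ * Aᵀ := by
  obtain ⟨-, hXAX, hAX, -⟩ := hX
  rw [Matrix.mul_assoc, ← transpose_mul, hAX, ← Matrix.mul_assoc, hXAX]

theorem eq_transpose_mul_mul (hX : IsMoorePenroseInverse A X) : X = Aᵀ * Xᵀ * X := by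
  obtain ⟨-, hXAX, -, hXA⟩ := hX
  rw [← transpose_mul, hXA, hXAX]

theorem transpose_eq_transpose_mul_mul (hX : IsMoorePenroseInverse A X) : Aᵀ = Aᵀ * A * X := by
  obtain ⟨hAXA, -, hAX, -⟩ := hX
  conv_lhs => rw [← hAXA, transpose_mul, hAX]
  rw [Matrix.mul_assoc]

theorem transpose_eq_mul_mul_transpose (hX : IsMoorePenroseInverse A X) : Aᵀ = X * A * Aᵀ := by
  obtain ⟨hAXA, -, -, hXA⟩ := hX
  conv_lhs => rw [← hAXA, Matrix.mul_assoc, transpose_mul, hXA]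

theorem unique (hX : IsMoorePenroseInverse A X) (hY : IsMoorePenroseInverse A Y) : X = Y :=
  calc X = X * Xᵀ * Aᵀ := hX.eq_mul_mul_transpose
    _ = X * Xᵀ * Aᵀ * (A * Y) := by
      conv_lhs => rw [hY.transpose_eq_transpose_mul_mul]
      simp only [Matrix.mul_assoc]
    _ = X * A * (Aᵀ * Yᵀ * Y) := by
      rw [← hX.eq_mul_mul_transpose, ← hY.eq_transpose_mul_mul, Matrix.mul_assoc]
    _ = Y := by
      rw [← Matrix.mul_assoc, ← Matrix.mul_assoc, ← hX.transpose_eq_mul_mul_transpose,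
        ← hY.eq_transpose_mul_mul]

end IsMoorePenroseInverse

theorem pinv_eq_of_isMoorePenroseInverse {m k : Type*} [Fintype m] [Fintype k]
    {A : Matrix m k ℝ} {X : Matrix k m ℝ} (hX : IsMoorePenroseInverse A X) : pinv A = X := by
  have hex : ∃ X, IsMoorePenroseInverse A X := ⟨X, hX⟩
  exact (dif_pos hex).trans (hex.choose_spec.unique hX)

section ComplementedInverse

variable {ι : Type*} [Fintype ι] [DecidableEq ι] {Q E : Matrix ι ι ℝ}

theorem inv_add_mul_of_mul_eq_zero (hQE : Q * E = 0) (hEE : E * E = E)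
    (hdet : IsUnit (Q + E).det) : (Q + E)⁻¹ * E = E := by
  have h : (Q + E) * E = E := by rw [Matrix.add_mul, hQE, hEE, zero_add]
  simpa only [h] using nonsing_inv_mul_cancel_left (Q + E) E hdet

theorem mul_inv_add_of_mul_eq_zero (hEQ : E * Q = 0) (hEE : E * E = E)
    (hdet : IsUnit (Q + E).det) : E * (Q + E)⁻¹ = E := by
  have h : E * (Q + E) = E := by rw [Matrix.mul_add, hEQ, hEE, zero_add]
  simpa only [h] using mul_nonsing_inv_cancel_right (Q + E) E hdet

theorem inv_add_sub_mul_self (hQE : Q * E = 0) (hEQ : E * Q = 0) (hEE : E * E = E)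
    (hdet : IsUnit (Q + E).det) : ((Q + E)⁻¹ - E) * Q = 1 - E := by
  calc ((Q + E)⁻¹ - E) * Q = (Q + E)⁻¹ * ((Q + E) - E) := by
        rw [Matrix.sub_mul, hEQ, sub_zero, add_sub_cancel_right]
    _ = 1 - E := by
        rw [Matrix.mul_sub, nonsing_inv_mul _ hdet, inv_add_mul_of_mul_eq_zero hQE hEE hdet]

theorem mul_inv_add_sub_self (hQE : Q * E = 0) (hEQ : E * Q = 0) (hEE : E * E = E)
    (hdet : IsUnit (Q + E).det) : Q * ((Q + E)⁻¹ - E) = 1 - E := by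
  calc Q * ((Q + E)⁻¹ - E) = ((Q + E) - E) * (Q + E)⁻¹ := by
        rw [Matrix.mul_sub, hQE, sub_zero, add_sub_cancel_right]
    _ = 1 - E := by
        rw [Matrix.sub_mul, mul_nonsing_inv _ hdet, mul_inv_add_of_mul_eq_zero hEQ hEE hdet]

theorem inv_add_sub_mul_eq_zero (hQE : Q * E = 0) (hEE : E * E = E)
    (hdet : IsUnit (Q + E).det) : ((Q + E)⁻¹ - E) * E = 0 := by
  rw [Matrix.sub_mul, inv_add_mul_of_mul_eq_zero hQE hEE hdet, hEE, sub_self]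

theorem isMoorePenroseInverse_inv_add_sub (hE : Eᵀ = E) (hQE : Q * E = 0) (hEQ : E * Q = 0)
    (hEE : E * E = E) (hdet : IsUnit (Q + E).det) :
    IsMoorePenroseInverse Q ((Q + E)⁻¹ - E) := by
  have hright := mul_inv_add_sub_self hQE hEQ hEE hdet
  have hleft := inv_add_sub_mul_self hQE hEQ hEE hdet
  have hEX : E * ((Q + E)⁻¹ - E) = 0 := by
    rw [Matrix.mul_sub, mul_inv_add_of_mul_eq_zero hEQ hEE hdet, hEE, sub_self]
  refine ⟨?_, ?_, ?_, ?_⟩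
  · rw [hright, Matrix.sub_mul, Matrix.one_mul, hEQ, sub_zero]
  · rw [hleft, Matrix.sub_mul, Matrix.one_mul, hEX, sub_zero]
  · rw [hright, transpose_sub, transpose_one, hE]
  · rw [hleft, transpose_sub, transpose_one, hE]

end ComplementedInverse

section Averaging

variable {ι : Type*} [Fintype ι]

variable (ι) in
noncomputable def averagingMatrix : Matrix ι ι ℝ := (Fintype.card ι : ℝ)⁻¹ • of fun _ _ => 1

@[simp]
theorem averagingMatrix_apply (i j : ι) : averagingMatrix ι i j = (Fintype.card ι : ℝ)⁻¹ := by
  simp [averagingMatrix]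

theorem transpose_averagingMatrix : (averagingMatrix ι)ᵀ = averagingMatrix ι := by
  ext; simp

theorem averagingMatrix_mulVec (v : ι → ℝ) :
    averagingMatrix ι *ᵥ v = fun _ => (Fintype.card ι : ℝ)⁻¹ * ∑ i, v i := by
  ext; simp [mulVec, dotProduct, Finset.mul_sum]

theorem averagingMatrix_mulVec_one [Nonempty ι] : averagingMatrix ι *ᵥ 1 = 1 := by
  ext; simp [averagingMatrix_mulVec]

theorem averagingMatrix_mul_self [Nonempty ι] :
    averagingMatrix ι * averagingMatrix ι = averagingMatrix ι := by
  ext; simp [mul_apply]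

theorem mul_averagingMatrix_eq_zero {Q : Matrix ι ι ℝ} (hQ1 : Q *ᵥ 1 = 0) :
    Q * averagingMatrix ι = 0 := by
  ext i j
  simpa [mul_apply, mulVec, dotProduct, ← Finset.sum_mul] using
    congrArg (· * (Fintype.card ι : ℝ)⁻¹) (congrFun hQ1 i)

theorem averagingMatrix_mul_eq_zero {Q : Matrix ι ι ℝ} (hQ : Qᵀ = Q) (hQ1 : Q *ᵥ 1 = 0) :
    averagingMatrix ι * Q = 0 := by
  simpa [transpose_averagingMatrix, hQ] using congrArg transpose (mul_averagingMatrix_eq_zero hQ1)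

theorem sum_mulVec_eq_zero {Q : Matrix ι ι ℝ} (hQ : Qᵀ = Q) (hQ1 : Q *ᵥ 1 = 0) (v : ι → ℝ) :
    ∑ i, (Q *ᵥ v) i = 0 := by
  rw [← one_dotProduct, dotProduct_mulVec, ← mulVec_transpose, hQ, hQ1, zero_dotProduct]

end Averaging

section KernelSpanOne

variable {ι : Type*} [Fintype ι] [DecidableEq ι] [Nonempty ι] {Q : Matrix ι ι ℝ}

theorem isUnit_det_add_averagingMatrix (hQ : Qᵀ = Q)
    (hker : ∀ v : ι → ℝ, Q *ᵥ v = 0 ↔ ∃ c : ℝ, v = fun _ => c) :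
    IsUnit (Q + averagingMatrix ι).det := by
  refine isUnit_iff_ne_zero.2 fun hdet => ?_
  obtain ⟨v, hv0, hv⟩ := exists_mulVec_eq_zero_iff.2 hdet
  have hQ1 : Q *ᵥ 1 = 0 := (hker 1).2 ⟨1, rfl⟩
  have hcard : (Fintype.card ι : ℝ) ≠ 0 := Nat.cast_ne_zero.2 Fintype.card_ne_zero
  rw [add_mulVec, averagingMatrix_mulVec] at hv
  have hsum : ∑ i, v i = 0 := by
    have := congrArg (fun w => ∑ i, w i) hv
    simpa [Finset.sum_add_distrib, sum_mulVec_eq_zero hQ hQ1, hcard] using this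
  obtain ⟨c, rfl⟩ := (hker v).1 (by simpa [hsum, ← Pi.zero_def] using hv)
  exact hv0 (funext fun _ => by simpa [hcard] using hsum)

theorem pinv_eq_of_ker_eq_span_one (hQ : Qᵀ = Q)
    (hker : ∀ v : ι → ℝ, Q *ᵥ v = 0 ↔ ∃ c : ℝ, v = fun _ => c) :
    pinv Q = (Q + averagingMatrix ι)⁻¹ - averagingMatrix ι := by
  have hQ1 : Q *ᵥ 1 = 0 := (hker 1).2 ⟨1, rfl⟩
  exact pinv_eq_of_isMoorePenroseInverse <|
    isMoorePenroseInverse_inv_add_sub transpose_averagingMatrix (mul_averagingMatrix_eq_zero hQ1)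
      (averagingMatrix_mul_eq_zero hQ hQ1) averagingMatrix_mul_self
      (isUnit_det_add_averagingMatrix hQ hker)

theorem pinv_mul_self_of_ker_eq_span_one (hQ : Qᵀ = Q)
    (hker : ∀ v : ι → ℝ, Q *ᵥ v = 0 ↔ ∃ c : ℝ, v = fun _ => c) :
    pinv Q * Q = 1 - averagingMatrix ι := by
  have hQ1 : Q *ᵥ 1 = 0 := (hker 1).2 ⟨1, rfl⟩
  rw [pinv_eq_of_ker_eq_span_one hQ hker]
  exact inv_add_sub_mul_self (mul_averagingMatrix_eq_zero hQ1) (averagingMatrix_mul_eq_zero hQ hQ1)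
    averagingMatrix_mul_self (isUnit_det_add_averagingMatrix hQ hker)

theorem pinv_mulVec_one_of_ker_eq_span_one (hQ : Qᵀ = Q)
    (hker : ∀ v : ι → ℝ, Q *ᵥ v = 0 ↔ ∃ c : ℝ, v = fun _ => c) :
    pinv Q *ᵥ 1 = 0 := by
  have hQ1 : Q *ᵥ 1 = 0 := (hker 1).2 ⟨1, rfl⟩
  rw [← averagingMatrix_mulVec_one, mulVec_mulVec, pinv_eq_of_ker_eq_span_one hQ hker,
    inv_add_sub_mul_eq_zero (mul_averagingMatrix_eq_zero hQ1) averagingMatrix_mul_self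
      (isUnit_det_add_averagingMatrix hQ hker), zero_mulVec]

end KernelSpanOne

namespace FiedlerBapat

variable {ι : Type*} [Fintype ι] [Nonempty ι] {Q : Matrix ι ι ℝ}

theorem sum_weights_eq_one (hQ : Qᵀ = Q) (hQ1 : Q *ᵥ 1 = 0) (ζ : ι → ℝ) :
    ∑ i, ((1 / 2 : ℝ) • Q *ᵥ ζ + (Fintype.card ι : ℝ)⁻¹ • (1 : ι → ℝ)) i = 1 := by
  simp [Finset.sum_add_distrib, ← Finset.mul_sum, sum_mulVec_eq_zero hQ hQ1]

variable [DecidableEq ι]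

theorem pinv_mulVec_weights (hQ : Qᵀ = Q)
    (hker : ∀ v : ι → ℝ, Q *ᵥ v = 0 ↔ ∃ c : ℝ, v = fun _ => c) (ζ : ι → ℝ) :
    pinv Q *ᵥ ((1 / 2 : ℝ) • Q *ᵥ ζ + (Fintype.card ι : ℝ)⁻¹ • (1 : ι → ℝ)) =
      (1 / 2 : ℝ) • (ζ - averagingMatrix ι *ᵥ ζ) := by
  rw [mulVec_add, mulVec_smul, mulVec_smul, mulVec_mulVec, pinv_mul_self_of_ker_eq_span_one hQ hker,
    pinv_mulVec_one_of_ker_eq_span_one hQ hker, sub_mulVec, one_mulVec, smul_zero, add_zero]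

theorem omega_mulVec_weights (hQ : Qᵀ = Q)
    (hker : ∀ v : ι → ℝ, Q *ᵥ v = 0 ↔ ∃ c : ℝ, v = fun _ => c) (ζ : ι → ℝ) :
    (Matrix.of (fun _ j => ζ j) + Matrix.of (fun i _ => ζ i) - 2 • pinv Q) *ᵥ
        ((1 / 2 : ℝ) • Q *ᵥ ζ + (Fintype.card ι : ℝ)⁻¹ • (1 : ι → ℝ)) =
      (2 * ((1 / 4) * (ζ ⬝ᵥ Q *ᵥ ζ) + (Fintype.card ι : ℝ)⁻¹ * ∑ i, ζ i)) • (1 : ι → ℝ) := by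
  have hQ1 : Q *ᵥ 1 = 0 := (hker 1).2 ⟨1, rfl⟩
  set p := (1 / 2 : ℝ) • Q *ᵥ ζ + (Fintype.card ι : ℝ)⁻¹ • (1 : ι → ℝ) with hp
  have hrow : (Matrix.of (fun _ j => ζ j) : Matrix ι ι ℝ) *ᵥ p = fun _ => ζ ⬝ᵥ p := rfl
  have hcol : (Matrix.of (fun i _ => ζ i) : Matrix ι ι ℝ) *ᵥ p = ζ := by
    have hsum : ∑ i, p i = 1 := sum_weights_eq_one hQ hQ1 ζ
    ext i
    simp only [mulVec, dotProduct, of_apply, ← Finset.mul_sum, hsum, mul_one]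
  have hdot : ζ ⬝ᵥ p = (1 / 2) * (ζ ⬝ᵥ Q *ᵥ ζ) + (Fintype.card ι : ℝ)⁻¹ * ∑ i, ζ i := by
    rw [hp, dotProduct_add, dotProduct_smul, dotProduct_smul, dotProduct_one, smul_eq_mul,
      smul_eq_mul]
  rw [sub_mulVec, add_mulVec, smul_mulVec, hrow, hcol, hdot, pinv_mulVec_weights hQ hker,
    averagingMatrix_mulVec, two_smul]
  ext i
  simp only [Pi.add_apply, Pi.sub_apply, Pi.smul_apply, Pi.one_apply, smul_eq_mul]
  ring

theorem omega_mul (hQ : Qᵀ = Q)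
    (hker : ∀ v : ι → ℝ, Q *ᵥ v = 0 ↔ ∃ c : ℝ, v = fun _ => c) (ζ : ι → ℝ) :
    (Matrix.of (fun _ j => ζ j) + Matrix.of (fun i _ => ζ i) - 2 • pinv Q) * Q =
      (-2 : ℝ) • (1 : Matrix ι ι ℝ) + (2 : ℝ) • Matrix.of (fun _ j =>
        ((1 / 2 : ℝ) • Q *ᵥ ζ + (Fintype.card ι : ℝ)⁻¹ • (1 : ι → ℝ)) j) := by
  have hQ1 : Q *ᵥ 1 = 0 := (hker 1).2 ⟨1, rfl⟩
  have hrow :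
      (Matrix.of (fun _ j => ζ j) : Matrix ι ι ℝ) * Q = Matrix.of fun _ j => (Q *ᵥ ζ) j := by
    rw [← vecMul_transpose, hQ]
    rfl
  have hcol : (Matrix.of (fun i _ => ζ i) : Matrix ι ι ℝ) * Q = 0 := by
    have h1Q : (1 : ι → ℝ) ᵥ* Q = 0 := by rw [← mulVec_transpose, hQ, hQ1]
    ext i j
    simpa [mul_apply, vecMul, dotProduct, ← Finset.mul_sum] using
      congrArg (ζ i * ·) (congrFun h1Q j)
  rw [sub_mul, add_mul, smul_mul, pinv_mul_self_of_ker_eq_span_one hQ hker, hrow, hcol, two_smul]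
  ext i j
  simp only [Matrix.add_apply, Matrix.sub_apply, Matrix.smul_apply, Matrix.zero_apply, of_apply,
    one_apply, averagingMatrix_apply, Pi.add_apply, Pi.smul_apply, Pi.one_apply, smul_eq_mul]
  split_ifs <;> ring

end FiedlerBapat

theorem fiedler_bapat_relations_general
    {n : ℕ} (hn : 2 ≤ n) (Q : Matrix (Fin n) (Fin n) ℝ)
    (hQ : Q.PosSemidef)
    (hker : ∀ v : Fin n → ℝ, Q.mulVec v = 0 ↔ ∃ c : ℝ, v = fun _ => c)
    (ζ : Fin n → ℝ)
    (Ω : Matrix (Fin n) (Fin n) ℝ)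
    (hΩ : Ω = Matrix.of (fun _ j => ζ j) + Matrix.of (fun i _ => ζ i) - 2 • pinv Q)
    (p : Fin n → ℝ)
    (hp : p = (1 / 2 : ℝ) • Q.mulVec ζ + (1 / (n : ℝ)) • ((fun _ => 1) : Fin n → ℝ))
    (σ2 : ℝ) (hσ2 : σ2 = (1 / 4) * (ζ ⬝ᵥ Q.mulVec ζ) + (1 / (n : ℝ)) * ∑ i, ζ i) :
    (∑ i, p i = 1) ∧
    Ω.mulVec p = (2 * σ2) • ((fun _ => 1) : Fin n → ℝ) ∧
    Ω * Q = (-2 : ℝ) • (1 : Matrix (Fin n) (Fin n) ℝ) + (2 : ℝ) • Matrix.of (fun _ j => p j) := by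
  have : Nonempty (Fin n) := ⟨⟨0, by omega⟩⟩
  have hsymm : Qᵀ = Q := hQ.isHermitian
  have hcard : 1 / (n : ℝ) = (Fintype.card (Fin n) : ℝ)⁻¹ := by simp
  rw [hcard] at hp hσ2
  subst hΩ hp hσ2
  exact ⟨FiedlerBapat.sum_weights_eq_one hsymm ((hker 1).2 ⟨1, rfl⟩) ζ,
    FiedlerBapat.omega_mulVec_weights hsymm hker ζ, FiedlerBapat.omega_mul hsymm hker ζ⟩

theorem fiedler_bapat_relations
    {n : ℕ} (hn : 2 ≤ n) (Q : Matrix (Fin n) (Fin n) ℝ)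
    (hQ : Q.PosSemidef)
    (hker : ∀ v : Fin n → ℝ, Q.mulVec v = 0 ↔ ∃ c : ℝ, v = fun _ => c)
    (ζ : Fin n → ℝ) (hζ : ζ = fun i => pinv Q i i)
    (Ω : Matrix (Fin n) (Fin n) ℝ)
    (hΩ : Ω = Matrix.of (fun _ j => ζ j) + Matrix.of (fun i _ => ζ i) - 2 • pinv Q)
    (p : Fin n → ℝ)
    (hp : p = (1 / 2 : ℝ) • Q.mulVec ζ + (1 / (n : ℝ)) • ((fun _ => 1) : Fin n → ℝ))
    (σ2 : ℝ) (hσ2 : σ2 = (1 / 4) * (ζ ⬝ᵥ Q.mulVec ζ) + (1 / (n : ℝ)) * ∑ i, ζ i) :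
    (∑ i, p i = 1) ∧
    Ω.mulVec p = (2 * σ2) • ((fun _ => 1) : Fin n → ℝ) ∧
    Ω * Q = (-2 : ℝ) • (1 : Matrix (Fin n) (Fin n) ℝ) + (2 : ℝ) • Matrix.of (fun _ j => p j) :=
  fiedler_bapat_relations_general hn Q hQ hker ζ Ω hΩ p hp σ2 hσ2
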